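/- arXiv:1912.07831 — 4 statements merged into one kernel-verified Lean document; each statement's English description precedes it below -/
import Mathlib

section
/- Let A be a probability group. Then for all a, b, c ∈ A, one has p(a·b = c⁻¹)·s(a) = p(b·c = a⁻¹)·s(c). -/
/-- A probability group (Harrison): a set `A` with a distinguished element `one`,
an inverse map `inv`, and a probability map `p` satisfying axioms (1)-(6). -/
structure ProbabilityGroup (A : Type*) where
  /-- the probability map: `p a b c` is `p(a·b = c)` -/
  p : A → A → A → ℝ
  /-- the unit element -/
  one : A
  /-- the inverse map -/
  inv : A → A
  p_nonneg : ∀ a b c, 0 ≤ p a b c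
  finite_support : ∀ a b, {c | p a b c ≠ 0}.Finite
  sum_eq_one : ∀ a b, ∑ᶠ c, p a b c = 1
  assoc : ∀ a b c d, ∑ᶠ x, p a b x * p x c d = ∑ᶠ y, p a y d * p b c y
  one_mul : ∀ a, p one a a = 1
  mul_one : ∀ a, p a one a = 1
  inv_pos : ∀ a, 0 < p a (inv a) one
  inv_unique : ∀ a b, 0 < p a b one → b = inv a
  p_inv : ∀ a b c, p a b c = p (inv b) (inv a) (inv c)
  inv_symm : ∀ a, p a (inv a) one = p (inv a) a one

/-- The size `s(a) = 1 / p(a·a⁻¹ = 1)` of an element of a probability group. -/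
noncomputable def ProbabilityGroup.s {A : Type*} (P : ProbabilityGroup A) (a : A) : ℝ :=
  1 / P.p a (P.inv a) P.one

/-!
Only `c⁻¹` multiplies with `c` to `1` with positive probability, and only `a⁻¹` does so with `a`.
So associativity `(a·b)·c = a·(b·c)` evaluated at `1` collapses on each side to a single term,
`p(a·b = c⁻¹) p(c⁻¹·c = 1) = p(a·a⁻¹ = 1) p(b·c = a⁻¹)`, which is the identity after
replacing `p(c⁻¹·c = 1)` by `p(c·c⁻¹ = 1)` and dividing by `p(a·a⁻¹ = 1) p(c·c⁻¹ = 1)`.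
-/

namespace ProbabilityGroup

variable {A : Type*} (P : ProbabilityGroup A)

lemma inv_one : P.inv P.one = P.one :=
  (P.inv_unique P.one P.one (by rw [P.one_mul]; exact one_pos)).symm

lemma inv_inv (a : A) : P.inv (P.inv a) = a :=
  (P.inv_unique (P.inv a) a (by rw [← P.inv_symm]; exact P.inv_pos a)).symm

lemma eq_inv_of_p_one_pos_left {x c : A} (h : 0 < P.p x c P.one) : x = P.inv c := by
  rw [P.p_inv, P.inv_one] at h
  rw [← P.inv_inv x, P.inv_unique _ _ h, P.inv_inv]

lemma p_one_eq_zero_of_ne_inv {a y : A} (hy : y ≠ P.inv a) : P.p a y P.one = 0 :=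
  (P.p_nonneg a y P.one).eq_or_lt.resolve_right (mt (P.inv_unique a y) hy) |>.symm

lemma p_one_eq_zero_of_ne_inv_left {x c : A} (hx : x ≠ P.inv c) : P.p x c P.one = 0 :=
  (P.p_nonneg x c P.one).eq_or_lt.resolve_right (mt P.eq_inv_of_p_one_pos_left hx) |>.symm

lemma finsum_mul_p_one_left (f : A → ℝ) (c : A) :
    ∑ᶠ x, f x * P.p x c P.one = f (P.inv c) * P.p (P.inv c) c P.one :=
  finsum_eq_single _ _ fun _ hx => by rw [P.p_one_eq_zero_of_ne_inv_left hx, mul_zero]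

lemma finsum_p_one_mul (a : A) (g : A → ℝ) :
    ∑ᶠ y, P.p a y P.one * g y = P.p a (P.inv a) P.one * g (P.inv a) :=
  finsum_eq_single _ _ fun _ hy => by rw [P.p_one_eq_zero_of_ne_inv hy, zero_mul]

lemma assoc_one (a b c : A) :
    P.p a b (P.inv c) * P.p c (P.inv c) P.one = P.p a (P.inv a) P.one * P.p b c (P.inv a) := by
  have h := P.assoc a b c P.one
  rwa [P.finsum_mul_p_one_left, P.finsum_p_one_mul, ← P.inv_symm] at h

end ProbabilityGroup

/-- For all `a, b, c` in a probability group, `p(a·b = c⁻¹)·s(a) = p(b·c = a⁻¹)·s(c)`. -/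
theorem probabilityGroup_size_identity {A : Type*} (P : ProbabilityGroup A) (a b c : A) :
    P.p a b (P.inv c) * P.s a = P.p b c (P.inv a) * P.s c := by
  have ha := (P.inv_pos a).ne'
  have hc := (P.inv_pos c).ne'
  rw [ProbabilityGroup.s, ProbabilityGroup.s, mul_one_div, mul_one_div,
    div_eq_div_iff ha hc, P.assoc_one, mul_comm]
end

section
/- Let A be a probability group and let r be a positive integer such that A is quasi-r-integral. If there exists an element a ∈ A with p(a·a⁻¹ = 1) < 1 (equivalently, s(a) > 1), then r = 1 or r = 2. -/
/-- A probability group is quasi-`r`-integral if each `s(a)^(1/r)` is an algebraic integer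
and `p(a·b=c) s(a)^(1/r) s(b)^(1/r) / s(c)^(1/r)` is always a non-negative integer. -/
def ProbabilityGroup.QuasiIntegral {A : Type*} (P : ProbabilityGroup A) (r : ℕ) : Prop :=
  (∀ a, IsIntegral ℤ (P.s a ^ ((1 : ℝ) / r))) ∧
  (∀ a b c, ∃ n : ℕ,
    P.p a b c * P.s a ^ ((1 : ℝ) / r) * P.s b ^ ((1 : ℝ) / r) / P.s c ^ ((1 : ℝ) / r) = n)

/-- If a probability group is quasi-`r`-integral and contains an element `a` with
`p(a·a⁻¹ = 1) < 1`, then `r = 1` or `r = 2`. -/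
theorem quasiIntegral_r_le_two {A : Type*} (P : ProbabilityGroup A) (r : ℕ) (hr : 0 < r)
    (hq : P.QuasiIntegral r) (ha : ∃ a : A, P.p a (P.inv a) P.one < 1) :
    r = 1 ∨ r = 2 := by
  obtain ⟨a, ha⟩ := ha
  have hpos := P.inv_pos a
  have hs1 : 1 < P.s a := by
    rw [ProbabilityGroup.s, lt_div_iff₀ hpos]; linarith
  have hs0 : 0 < P.s a := lt_trans one_pos hs1
  have hinv1 : P.inv P.one = P.one :=
    (P.inv_unique P.one P.one (by rw [P.one_mul]; norm_num)).symm
  have hsone : P.s P.one = 1 := by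
    rw [ProbabilityGroup.s, hinv1, P.one_mul]; norm_num
  have hiia : P.inv (P.inv a) = a :=
    (P.inv_unique (P.inv a) a (by rw [← P.inv_symm]; exact hpos)).symm
  have hsinv : P.s (P.inv a) = P.s a := by
    rw [ProbabilityGroup.s, ProbabilityGroup.s, hiia, ← P.inv_symm]
  have hq_eq : P.p a (P.inv a) P.one = (P.s a)⁻¹ := by
    rw [ProbabilityGroup.s, one_div, inv_inv]
  obtain ⟨n, hn⟩ := hq.2 a (P.inv a) P.one
  rw [hsone, hsinv, Real.one_rpow, div_one, hq_eq, mul_assoc,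
    ← Real.rpow_add hs0] at hn
  rcases Nat.lt_or_ge r 3 with h3 | h3
  · interval_cases r
    · exact Or.inl rfl
    · exact Or.inr rfl
  · exfalso
    have hrr : (2 : ℝ) / r < 1 := by
      rw [div_lt_one (by positivity)]
      exact_mod_cast (by omega : 2 < r)
    have hee : (1 : ℝ) / r + 1 / r = 2 / r := by ring
    rw [hee] at hn
    have h2 : P.s a ^ ((2 : ℝ) / r) < P.s a := by
      nth_rewrite 2 [← Real.rpow_one (P.s a)]
      exact Real.rpow_lt_rpow_of_exponent_lt hs1 hrr
    have hlt : (P.s a)⁻¹ * P.s a ^ ((2 : ℝ) / r) < 1 := by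
      rw [inv_mul_eq_div]; exact (div_lt_one hs0).mpr h2
    have hgt : 0 < (P.s a)⁻¹ * P.s a ^ ((2 : ℝ) / r) := by positivity
    rw [hn] at hlt hgt
    have : 1 ≤ n := Nat.one_le_iff_ne_zero.mpr (by rintro rfl; simp at hgt)
    have : (1 : ℝ) ≤ n := by exact_mod_cast this
    linarith
end

section
/- Let A = {1, a, b} be a 2-integral probability group with three distinct elements such that a⁻¹ = a and b⁻¹ = b, and write s(a) = n₁² and s(b) = n₂² with n₁, n₂ positive integers. Then gcd(n₁, n₂) = 1. -/
/-- A probability group is 2-integral if each `s(a)^(1/2)` is a positive integer and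
`p(a·b=c) s(a)^(1/2) s(b)^(1/2) / s(c)^(1/2)` is always a non-negative integer. -/
def ProbabilityGroup.TwoIntegral {A : Type*} (P : ProbabilityGroup A) : Prop :=
  (∀ a, ∃ n : ℕ, 0 < n ∧ Real.sqrt (P.s a) = n) ∧
  (∀ a b c, ∃ n : ℕ,
    P.p a b c * Real.sqrt (P.s a) * Real.sqrt (P.s b) / Real.sqrt (P.s c) = n)

theorem Nat.coprime_of_one_add_mul_add_mul_eq_sq {m n t j : ℕ}
    (h : 1 + t * m + j * n = m ^ 2) : Nat.Coprime m n := by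
  have hm : Nat.gcd m n ∣ m ^ 2 := dvd_pow (Nat.gcd_dvd_left m n) two_ne_zero
  have hlin : Nat.gcd m n ∣ t * m + j * n :=
    dvd_add ((Nat.gcd_dvd_left m n).mul_left t) ((Nat.gcd_dvd_right m n).mul_left j)
  rw [← h, add_assoc] at hm
  exact Nat.dvd_one.mp ((Nat.dvd_add_left hlin).mp hm)

namespace ProbabilityGroup

variable {A : Type*} (P : ProbabilityGroup A)

theorem s_pos (a : A) : 0 < P.s a := one_div_pos.mpr (P.inv_pos a)

theorem p_mul_inv_one (a : A) : P.p a (P.inv a) P.one = 1 / P.s a := by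
  rw [s, one_div_one_div]

theorem sum_p_eq_one_of_forall_mem (S : Finset A) (hS : ∀ c, c ∈ S) (a b : A) :
    ∑ c ∈ S, P.p a b c = 1 := by
  rw [← finsum_eq_finsetSum_of_support_subset _ (fun c _ => hS c), P.sum_eq_one]

theorem TwoIntegral.exists_p_eq {P : ProbabilityGroup A} (h : P.TwoIntegral) (a b c : A) :
    ∃ k : ℕ, P.p a b c = k * √(P.s c) / (√(P.s a) * √(P.s b)) := by
  obtain ⟨k, hk⟩ := h.2 a b c
  refine ⟨k, ?_⟩
  have hc : √(P.s c) ≠ 0 := (Real.sqrt_pos.mpr (P.s_pos c)).ne'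
  have hab : √(P.s a) * √(P.s b) ≠ 0 :=
    mul_ne_zero (Real.sqrt_pos.mpr (P.s_pos a)).ne' (Real.sqrt_pos.mpr (P.s_pos b)).ne'
  rw [← hk, div_mul_cancel₀ _ hc, mul_assoc, mul_div_cancel_right₀ _ hab]

end ProbabilityGroup

theorem twoIntegral_card_three_coprime_general {A : Type*} (P : ProbabilityGroup A) (a b : A)
    (ha : a ≠ P.one) (hb : b ≠ P.one) (hab : a ≠ b)
    (henum : ∀ x : A, x = P.one ∨ x = a ∨ x = b)
    (hia : P.inv a = a)
    (h2 : P.TwoIntegral)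
    (n₁ n₂ : ℕ)
    (hsa : P.s a = (n₁ : ℝ) ^ 2) (hsb : P.s b = (n₂ : ℝ) ^ 2) :
    Nat.gcd n₁ n₂ = 1 := by
  classical
  have hn₁ : (n₁ : ℝ) ≠ 0 := by
    rintro h
    simpa [hsa, h] using P.s_pos a
  have hsum := P.sum_p_eq_one_of_forall_mem {P.one, a, b} (by simpa using henum) a a
  rw [Finset.sum_insert (by simp [Ne.symm ha, Ne.symm hb]),
    Finset.sum_insert (by simpa using hab), Finset.sum_singleton] at hsum
  obtain ⟨t, ht⟩ := h2.exists_p_eq a a a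
  obtain ⟨j, hj⟩ := h2.exists_p_eq a a b
  have hone := P.p_mul_inv_one a
  rw [hia] at hone
  rw [hone, ht, hj, hsa, hsb, Real.sqrt_sq n₁.cast_nonneg, Real.sqrt_sq n₂.cast_nonneg] at hsum
  have key : (1 + t * n₁ + j * n₂ : ℝ) = n₁ ^ 2 := by
    field_simp at hsum
    linear_combination hsum
  exact Nat.coprime_of_one_add_mul_add_mul_eq_sq (by exact_mod_cast key)

/-- In a 2-integral probability group `{1, a, b}` with `a⁻¹ = a`, `b⁻¹ = b`,
`s(a) = n₁²` and `s(b) = n₂²`, one has `gcd(n₁, n₂) = 1`. -/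
theorem twoIntegral_card_three_coprime {A : Type*} (P : ProbabilityGroup A) (a b : A)
    (ha : a ≠ P.one) (hb : b ≠ P.one) (hab : a ≠ b)
    (henum : ∀ x : A, x = P.one ∨ x = a ∨ x = b)
    (hia : P.inv a = a) (hib : P.inv b = b)
    (h2 : P.TwoIntegral)
    (n₁ n₂ : ℕ) (hn₁ : 0 < n₁) (hn₂ : 0 < n₂)
    (hsa : P.s a = (n₁ : ℝ) ^ 2) (hsb : P.s b = (n₂ : ℝ) ^ 2) :
    Nat.gcd n₁ n₂ = 1 :=
  twoIntegral_card_three_coprime_general P a b ha hb hab henum hia h2 n₁ n₂ hsa hsb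
end

section
/- Let A = {1, a, b} be a 2-integral probability group with three distinct elements such that a⁻¹ = a and b⁻¹ = b. Then, after possibly interchanging a and b, the probability map is completely determined as follows: s(a) = 4, s(b) = 1, p(a·a=1) = 1/4, p(a·a=a) = 1/2, p(a·a=b) = 1/4, p(a·b=a) = p(b·a=a) = 1, p(a·b=b) = p(b·a=b) = 0, p(a·b=1) = p(b·a=1) = 0, p(b·b=1) = 1, and p(b·b=a) = p(b·b=b) = 0. In other words, A is the probability group A(ℂS₃) of irreducible characters of the symmetric group S₃. -/
/-- The probability-map data of `A(ℂS₃)` on `{1, a, b}` (with `a` the class of the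
2-dimensional character and `b` the sign character). -/
def ProbabilityGroup.S3spec {A : Type*} (P : ProbabilityGroup A) (a b : A) : Prop :=
  P.s a = 4 ∧ P.s b = 1 ∧
  P.p a a P.one = 1 / 4 ∧ P.p a a a = 1 / 2 ∧ P.p a a b = 1 / 4 ∧
  P.p a b a = 1 ∧ P.p b a a = 1 ∧ P.p a b b = 0 ∧ P.p b a b = 0 ∧
  P.p a b P.one = 0 ∧ P.p b a P.one = 0 ∧
  P.p b b P.one = 1 ∧ P.p b b a = 0 ∧ P.p b b b = 0

lemma key_nat (m n i j X V : ℕ) (hm : 0 < m) (hn : 0 < n)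
    (hA : 1 + X * m + i * n = m ^ 2) (hB : 1 + V * n + j * m = n ^ 2)
    (hC : i * m + j * n = m * n) :
    (m = 2 ∧ n = 1 ∧ i = 1 ∧ j = 0 ∧ X = 1 ∧ V = 0) ∨
    (m = 1 ∧ n = 2 ∧ i = 0 ∧ j = 1 ∧ X = 0 ∧ V = 1) := by
  have hcop : Nat.Coprime m n := by
    have h1 : Nat.gcd m n ∣ m ^ 2 := dvd_pow (Nat.gcd_dvd_left m n) two_ne_zero
    have h2 : Nat.gcd m n ∣ X * m + i * n :=
      dvd_add ((Nat.gcd_dvd_left m n).mul_left X) ((Nat.gcd_dvd_right m n).mul_left i)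
    have h3 := Nat.dvd_sub h1 h2
    have h4 : m ^ 2 - (X * m + i * n) = 1 := by omega
    rw [h4] at h3
    exact Nat.dvd_one.mp h3
  have hjm : j ≤ m := by
    by_contra h
    push_neg at h
    have h5 := (Nat.mul_lt_mul_right hn).mpr h
    omega
  have hin : i ≤ n := by
    by_contra h
    push_neg at h
    have h5 := (Nat.mul_lt_mul_right hm).mpr h
    rw [Nat.mul_comm n m] at h5
    omega
  have hdvd : n ∣ i := by
    have hC' : (i : ℤ) * m + j * n = m * n := by exact_mod_cast hC
    have h1 : i * m = n * (m - j) := by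
      zify [hjm]
      linear_combination hC'
    have h2 : n ∣ i * m := Dvd.intro (m - j) h1.symm
    exact hcop.symm.dvd_of_dvd_mul_right h2
  rcases Nat.eq_zero_or_pos i with hi0 | hipos
  · -- i = 0, then j = m, m = 1, n = 2
    right
    rw [hi0, zero_mul] at hC hA
    rw [zero_add] at hC
    rw [add_zero] at hA
    have hjeq : j = m := Nat.eq_of_mul_eq_mul_right hn hC
    have hm1 : m = 1 := by
      have h1 : m ∣ m ^ 2 := dvd_pow_self m two_ne_zero
      have h2 : m ∣ X * m := dvd_mul_left m X
      have h3 := Nat.dvd_sub h1 h2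
      have h4 : m ^ 2 - X * m = 1 := by omega
      rw [h4] at h3
      exact Nat.dvd_one.mp h3
    have hX0 : X = 0 := by rw [hm1] at hA; omega
    rw [hjeq, hm1, one_mul] at hB
    have hn2 : n = 2 := by
      have h1 : n ∣ n ^ 2 := dvd_pow_self n two_ne_zero
      have h2 : n ∣ V * n := dvd_mul_left n V
      have h3 := Nat.dvd_sub h1 h2
      have h4 : n ^ 2 - V * n = 2 := by omega
      rw [h4] at h3
      have h5 := Nat.le_of_dvd (by norm_num) h3
      interval_cases n <;> omega
    have hV1 : V = 1 := by rw [hn2] at hB; omega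
    exact ⟨hm1, hn2, hi0, by omega, hX0, hV1⟩
  · have hieq : i = n := le_antisymm hin (Nat.le_of_dvd hipos hdvd)
    left
    rw [hieq] at hC hA
    rw [Nat.mul_comm n m] at hC
    have hj0 : j = 0 := by
      have h6 : j * n = 0 := by omega
      rcases Nat.mul_eq_zero.mp h6 with h | h
      · exact h
      · omega
    rw [hj0, zero_mul, add_zero] at hB
    have hn1 : n = 1 := by
      have h1 : n ∣ n ^ 2 := dvd_pow_self n two_ne_zero
      have h2 : n ∣ V * n := dvd_mul_left n V
      have h3 := Nat.dvd_sub h1 h2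
      have h4 : n ^ 2 - V * n = 1 := by omega
      rw [h4] at h3
      exact Nat.dvd_one.mp h3
    have hV0 : V = 0 := by rw [hn1] at hB; omega
    rw [hn1, mul_one] at hA
    have hm2 : m = 2 := by
      have h1 : m ∣ m ^ 2 := dvd_pow_self m two_ne_zero
      have h2 : m ∣ X * m := dvd_mul_left m X
      have h3 := Nat.dvd_sub h1 h2
      have h4 : m ^ 2 - X * m = 2 := by omega
      rw [h4] at h3
      have h5 := Nat.le_of_dvd (by norm_num) h3
      interval_cases m <;> omega
    have hX1 : X = 1 := by rw [hm2] at hA; omega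
    exact ⟨hm2, hn1, by omega, hj0, hX1, hV0⟩

/-- A 2-integral probability group `{1, a, b}` with `a⁻¹ = a` and `b⁻¹ = b` is, after
possibly interchanging `a` and `b`, the probability group `A(ℂS₃)` of irreducible
characters of `S₃`. -/
theorem twoIntegral_card_three_selfinv {A : Type*} (P : ProbabilityGroup A) (a b : A)
    (ha : a ≠ P.one) (hb : b ≠ P.one) (hab : a ≠ b)
    (henum : ∀ x : A, x = P.one ∨ x = a ∨ x = b)
    (hia : P.inv a = a) (hib : P.inv b = b)
    (h2 : P.TwoIntegral) :
    P.S3spec a b ∨ P.S3spec b a := by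
  classical
  obtain ⟨hint1, hint2⟩ := h2
  -- sum over the three elements
  have sum3 : ∀ f : A → ℝ, (∑ᶠ c, f c) = f P.one + f a + f b := by
    intro f
    have hsub : Function.support f ⊆ (({P.one, a, b} : Finset A) : Set A) := by
      intro x _
      rcases henum x with h | h | h <;> simp [h]
    rw [finsum_eq_finset_sum_of_support_subset f hsub]
    have h1 : P.one ∉ ({a, b} : Finset A) := by
      simp only [Finset.mem_insert, Finset.mem_singleton]
      push_neg
      exact ⟨Ne.symm ha, Ne.symm hb⟩
    have h2' : a ∉ ({b} : Finset A) := by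
      simp only [Finset.mem_singleton]; exact hab
    rw [Finset.sum_insert h1, Finset.sum_insert h2', Finset.sum_singleton, add_assoc]
  have hsum : ∀ x y : A, P.p x y P.one + P.p x y a + P.p x y b = 1 := fun x y => by
    rw [← sum3 (P.p x y)]; exact P.sum_eq_one x y
  -- inv of one
  have hinv1 : P.inv P.one = P.one :=
    (P.inv_unique P.one P.one (by rw [P.one_mul]; norm_num)).symm
  -- zero values
  have hab1 : P.p a b P.one = 0 := by
    by_contra h
    have h1 := P.inv_unique a b (lt_of_le_of_ne (P.p_nonneg a b P.one) (Ne.symm h))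
    rw [hia] at h1
    exact hab h1.symm
  have hba1 : P.p b a P.one = 0 := by
    by_contra h
    have h1 := P.inv_unique b a (lt_of_le_of_ne (P.p_nonneg b a P.one) (Ne.symm h))
    rw [hib] at h1
    exact hab h1
  have ha1one : P.p a P.one P.one = 0 := by
    have h1 := hsum a P.one
    rw [P.mul_one a] at h1
    have h2 := P.p_nonneg a P.one P.one
    have h3 := P.p_nonneg a P.one b
    linarith
  have hb1one : P.p b P.one P.one = 0 := by
    have h1 := hsum b P.one
    rw [P.mul_one b] at h1
    have h2 := P.p_nonneg b P.one P.one
    have h3 := P.p_nonneg b P.one a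
    linarith
  -- p b a _ = p a b _
  have hbaa : P.p b a a = P.p a b a := by
    have h1 := P.p_inv b a a
    rwa [hia, hib] at h1
  have hbab : P.p b a b = P.p a b b := by
    have h1 := P.p_inv b a b
    rwa [hia, hib] at h1
  -- positivity of diagonal values
  have hαpos : 0 < P.p a a P.one := by have h1 := P.inv_pos a; rwa [hia] at h1
  have hβpos : 0 < P.p b b P.one := by have h1 := P.inv_pos b; rwa [hib] at h1
  -- sizes
  obtain ⟨m, hmpos, hsam⟩ := hint1 a
  obtain ⟨n, hnpos, hsbn⟩ := hint1 b
  have hmne : (m : ℝ) ≠ 0 := Nat.cast_ne_zero.mpr hmpos.ne'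
  have hnne : (n : ℝ) ≠ 0 := Nat.cast_ne_zero.mpr hnpos.ne'
  have hsa : P.s a = (m : ℝ) ^ 2 := by
    rw [← hsam, Real.sq_sqrt]
    unfold ProbabilityGroup.s
    rw [hia]
    positivity
  have hsb : P.s b = (n : ℝ) ^ 2 := by
    rw [← hsbn, Real.sq_sqrt]
    unfold ProbabilityGroup.s
    rw [hib]
    positivity
  have hα : P.p a a P.one = 1 / (m : ℝ) ^ 2 := by
    have h1 : (1 : ℝ) / P.p a a P.one = (m : ℝ) ^ 2 := by
      rw [← hsa]; unfold ProbabilityGroup.s; rw [hia]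
    rw [eq_div_iff (by positivity)]
    field_simp at h1
    linarith
  have hβ : P.p b b P.one = 1 / (n : ℝ) ^ 2 := by
    have h1 : (1 : ℝ) / P.p b b P.one = (n : ℝ) ^ 2 := by
      rw [← hsb]; unfold ProbabilityGroup.s; rw [hib]
    rw [eq_div_iff (by positivity)]
    field_simp at h1
    linarith
  -- integrality instances
  obtain ⟨i, hi⟩ := hint2 a b a
  rw [hsam, hsbn] at hi
  have hr : P.p a b a = (i : ℝ) / n := by
    rw [eq_div_iff hnne]
    have h1 : P.p a b a * (m : ℝ) * n / m = P.p a b a * n := by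
      field_simp; try ring
    rw [h1] at hi
    exact hi
  obtain ⟨j, hj⟩ := hint2 a b b
  rw [hsam, hsbn] at hj
  have ht : P.p a b b = (j : ℝ) / m := by
    rw [eq_div_iff hmne]
    have h1 : P.p a b b * (m : ℝ) * n / n = P.p a b b * m := by
      field_simp; try ring
    rw [h1] at hj
    exact hj
  obtain ⟨X, hX⟩ := hint2 a a a
  rw [hsam] at hX
  have hx : P.p a a a = (X : ℝ) / m := by
    rw [eq_div_iff hmne]
    have h1 : P.p a a a * (m : ℝ) * m / m = P.p a a a * m := by
      field_simp; try ring
    rw [h1] at hX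
    exact hX
  obtain ⟨V, hV⟩ := hint2 b b b
  rw [hsbn] at hV
  have hv : P.p b b b = (V : ℝ) / n := by
    rw [eq_div_iff hnne]
    have h1 : P.p b b b * (n : ℝ) * n / n = P.p b b b * n := by
      field_simp; try ring
    rw [h1] at hV
    exact hV
  -- associativity instances
  have hE1 := P.assoc a b b P.one
  rw [sum3, sum3] at hE1
  rw [hab1, ha1one] at hE1
  -- hE1 : 0 * p one b one + p a b a * p a b one + p a b b * p b b one
  --     = 0 * p b b one + p a a one * p b b a + p a b one * p b b b
  have hE1' : P.p a b b * P.p b b P.one = P.p a a P.one * P.p b b a := by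
    ring_nf at hE1 ⊢
    linarith
  have hE2 := P.assoc b a a P.one
  rw [sum3, sum3] at hE2
  rw [hba1, hb1one] at hE2
  rw [hbaa, hbab] at hE2
  have hE2' : P.p a b a * P.p a a P.one = P.p b b P.one * P.p a a b := by
    ring_nf at hE2 ⊢
    linarith
  -- solve for y = p a a b and u = p b b a
  have hy : P.p a a b = (i : ℝ) * n / m ^ 2 := by
    rw [hr, hα, hβ] at hE2'
    field_simp at hE2'
    rw [eq_div_iff (by positivity : ((m:ℝ)^2) ≠ 0)]
    have h5 : (P.p a a b * (m:ℝ)^2) * n = ((i:ℝ) * n) * n := by linear_combination (-(n:ℝ)) * hE2'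
    exact mul_right_cancel₀ hnne h5
  have hu : P.p b b a = (j : ℝ) * m / n ^ 2 := by
    rw [ht, hα, hβ] at hE1'
    field_simp at hE1'
    rw [eq_div_iff (by positivity : ((n:ℝ)^2) ≠ 0)]
    have h5 : (P.p b b a * (n:ℝ)^2) * m = ((j:ℝ) * m) * m := by linear_combination (-(m:ℝ)) * hE1'
    exact mul_right_cancel₀ hmne h5
  -- product forms
  have hα' : P.p a a P.one * (m:ℝ)^2 = 1 := by rw [hα]; field_simp
  have hβ' : P.p b b P.one * (n:ℝ)^2 = 1 := by rw [hβ]; field_simp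
  have hr' : P.p a b a * (n:ℝ) = i := by rw [hr]; field_simp
  have ht' : P.p a b b * (m:ℝ) = j := by rw [ht]; field_simp
  have hx' : P.p a a a * (m:ℝ) = X := by rw [hx]; field_simp
  have hv' : P.p b b b * (n:ℝ) = V := by rw [hv]; field_simp
  have hy' : P.p a a b * (m:ℝ)^2 = (i:ℝ) * n := by
    rw [hy]; field_simp
  have hu' : P.p b b a * (n:ℝ)^2 = (j:ℝ) * m := by
    rw [hu]; field_simp
  -- the three sum equations, in ℕ
  have hAr : ((1 + X * m + i * n : ℕ) : ℝ) = ((m ^ 2 : ℕ) : ℝ) := by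
    have h1 := hsum a a
    push_cast
    linear_combination (m:ℝ)^2 * h1 - hα' - (m:ℝ) * hx' - hy'
  have hAn : 1 + X * m + i * n = m ^ 2 := Nat.cast_injective hAr
  have hBr : ((1 + V * n + j * m : ℕ) : ℝ) = ((n ^ 2 : ℕ) : ℝ) := by
    have h1 := hsum b b
    push_cast
    linear_combination (n:ℝ)^2 * h1 - hβ' - hu' - (n:ℝ) * hv'
  have hBn : 1 + V * n + j * m = n ^ 2 := Nat.cast_injective hBr
  have hCr : ((i * m + j * n : ℕ) : ℝ) = ((m * n : ℕ) : ℝ) := by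
    have h1 := hsum a b
    rw [hab1] at h1
    push_cast
    linear_combination (m:ℝ) * (n:ℝ) * h1 - (m:ℝ) * hr' - (n:ℝ) * ht'
  have hCn : i * m + j * n = m * n := Nat.cast_injective hCr
  -- the key arithmetic
  rcases key_nat m n i j X V hmpos hnpos hAn hBn hCn with
    ⟨hm2, hn1, hi1, hj0, hX1, hV0⟩ | ⟨hm1, hn2, hi0, hj1, hX0, hV1⟩
  · left
    subst hm2 hn1 hi1 hj0 hX1 hV0
    norm_num at hsa hsb hα hβ hr ht hx hv hy hu
    exact ⟨hsa, hsb, hα, hx, hy, hr, by rw [hbaa]; exact hr, ht, by rw [hbab]; exact ht,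
      hab1, hba1, hβ, hu, hv⟩
  · right
    subst hm1 hn2 hi0 hj1 hX0 hV1
    norm_num at hsa hsb hα hβ hr ht hx hv hy hu
    exact ⟨hsb, hsa, hβ, hv, hu, by rw [hbab]; exact ht, ht, by rw [hbaa]; exact hr, hr,
      hba1, hab1, hα, hy, hx⟩
end
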